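/- Let c > 0 and let F be a nonnegative function on G(n,k) that is uniformly polyconvex with constant c, i.e., Σ_{i=1}^d m_i * F(η_i) − F(η_0) ≥ c * (Σ_{i=1}^d m_i * ‖η_i‖ − ‖η_0‖) whenever d ≥ 1, m₁, …, m_d > 0, η_0, η₁, …, η_d ∈ G(n,k) and η_0 = Σ_{i=1}^d m_i • η_i. Then F is polyconvex: Conv_F(ξ) = F(ξ) for every ξ ∈ G(n,k), and hence there exists a gauge h on EuclideanSpace ℝ (Λ(n,k)) with h = F on G(n,k). -/

import Mathlib

open scoped BigOperators Matrix

/-- `Lam n k` : the `k`-element subsets of `Fin n` (the index set `Λ(n,k)`). -/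
abbrev Lam (n k : ℕ) : Type := {s : Finset (Fin n) // s.card = k}

/-- The Plücker (minor) vector of a matrix `A : Matrix (Fin n) (Fin k) ℝ`:
`M(A)(λ)` is the determinant of the `k × k` submatrix of `A` formed by the rows
indexed by `λ`. -/
noncomputable def pluecker (n k : ℕ) (A : Matrix (Fin n) (Fin k) ℝ) :
    EuclideanSpace ℝ (Lam n k) :=
  WithLp.toLp 2 fun lam => (A.submatrix (lam.1.orderEmbOfFin lam.2) id).det

/-- The Plücker model of the oriented Grassmannian `G(n,k)`. -/
def Grass (n k : ℕ) : Set (EuclideanSpace ℝ (Lam n k)) :=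
  {x | ∃ A : Matrix (Fin n) (Fin k) ℝ, Aᵀ * A = 1 ∧ pluecker n k A = x}

/-- The set of costs of representations of a point as a finite positive
combination of points of the Grassmannian. -/
def reprSet (n k : ℕ) (F : EuclideanSpace ℝ (Lam n k) → ℝ)
    (x : EuclideanSpace ℝ (Lam n k)) : Set ℝ :=
  {t | ∃ (N : ℕ) (m : Fin N → ℝ) (η : Fin N → EuclideanSpace ℝ (Lam n k)),
    1 ≤ N ∧ (∀ i, 0 < m i) ∧ (∀ i, η i ∈ Grass n k) ∧
    x = ∑ i, m i • η i ∧ t = ∑ i, m i * F (η i)}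

/-- The convex positively homogeneous hull of an integrand. -/
noncomputable def ConvF (n k : ℕ) (F : EuclideanSpace ℝ (Lam n k) → ℝ)
    (x : EuclideanSpace ℝ (Lam n k)) : ℝ :=
  sInf (reprSet n k F x)

/-- A gauge: a nonnegative, convex, positively homogeneous real function. -/
def IsGauge (n k : ℕ) (h : EuclideanSpace ℝ (Lam n k) → ℝ) : Prop :=
  (∀ x, 0 ≤ h x) ∧ ConvexOn ℝ Set.univ h ∧
    ∀ (t : ℝ) (x : EuclideanSpace ℝ (Lam n k)), 0 ≤ t → h (t • x) = t * h x

/-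
Uniform polyconvexity and the triangle inequality `‖η₀‖ ≤ ∑ mᵢ ‖ηᵢ‖` give
`F η₀ ≤ ∑ mᵢ F ηᵢ` for every decomposition `η₀ = ∑ mᵢ ηᵢ` of a point of `G(n,k)`, so the
infimum `Conv_F` equals `F` on `G(n,k)`. `Conv_F` is itself a gauge: infima of costs of
positive combinations are subadditive and positively homogeneous, and they are finite
everywhere because `G(n,k)` contains `± e_λ` for every `λ`.
-/

open scoped Pointwise

section PosComb

variable {E : Type*} [AddCommGroup E] [Module ℝ E] {S : Set E} {F : E → ℝ}

-- `reprSet n k F` and `ConvF n k F` are `posCombCosts (Grass n k) F` and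
-- `posCombHull (Grass n k) F` by definition.
def posCombCosts (S : Set E) (F : E → ℝ) (x : E) : Set ℝ :=
  {t | ∃ (N : ℕ) (m : Fin N → ℝ) (η : Fin N → E),
    1 ≤ N ∧ (∀ i, 0 < m i) ∧ (∀ i, η i ∈ S) ∧
    x = ∑ i, m i • η i ∧ t = ∑ i, m i * F (η i)}

noncomputable def posCombHull (S : Set E) (F : E → ℝ) (x : E) : ℝ :=
  sInf (posCombCosts S F x)

theorem self_mem_posCombCosts {ξ : E} (hξ : ξ ∈ S) : F ξ ∈ posCombCosts S F ξ :=
  ⟨1, fun _ => 1, fun _ => ξ, le_rfl, fun _ => one_pos, fun _ => hξ, by simp, by simp⟩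

theorem nonneg_of_mem_posCombCosts (hF : ∀ ξ ∈ S, 0 ≤ F ξ) {x : E} {t : ℝ}
    (ht : t ∈ posCombCosts S F x) : 0 ≤ t := by
  obtain ⟨N, m, η, -, hm, hη, -, rfl⟩ := ht
  exact Finset.sum_nonneg fun i _ => mul_nonneg (hm i).le (hF _ (hη i))

theorem posCombCosts_bddBelow (hF : ∀ ξ ∈ S, 0 ≤ F ξ) (x : E) :
    BddBelow (posCombCosts S F x) :=
  ⟨0, fun _ ht => nonneg_of_mem_posCombCosts hF ht⟩

theorem mul_mem_posCombCosts {x : E} {s t : ℝ} (ht : 0 < t) (hs : s ∈ posCombCosts S F x) :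
    t * s ∈ posCombCosts S F (t • x) := by
  obtain ⟨N, m, η, hN, hm, hη, rfl, rfl⟩ := hs
  exact ⟨N, fun i => t * m i, η, hN, fun i => mul_pos ht (hm i), hη,
    by simp [Finset.smul_sum, smul_smul], by simp [Finset.mul_sum, mul_assoc]⟩

theorem add_mem_posCombCosts {x y : E} {s t : ℝ} (hs : s ∈ posCombCosts S F x)
    (ht : t ∈ posCombCosts S F y) : s + t ∈ posCombCosts S F (x + y) := by
  obtain ⟨N, m, η, hN, hm, hη, rfl, rfl⟩ := hs
  obtain ⟨N', m', η', -, hm', hη', rfl, rfl⟩ := ht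
  refine ⟨N + N', Fin.append m m', Fin.append η η', le_add_right hN,
    Fin.addCases (by simpa using hm) (by simpa using hm'),
    Fin.addCases (by simpa using hη) (by simpa using hη'), ?_, ?_⟩ <;>
  simp [Fin.sum_univ_add]

theorem posCombCosts_add_subset (x y : E) :
    posCombCosts S F x + posCombCosts S F y ⊆ posCombCosts S F (x + y) := by
  rintro _ ⟨s, hs, t, ht, rfl⟩
  exact add_mem_posCombCosts hs ht

theorem posCombCosts_smul {t : ℝ} (ht : 0 < t) (x : E) :
    posCombCosts S F (t • x) = t • posCombCosts S F x := by
  refine Set.Subset.antisymm (fun s hs => ⟨t⁻¹ * s, ?_, by simp [ht.ne']⟩) ?_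
  · simpa [ht.ne'] using mul_mem_posCombCosts (inv_pos.mpr ht) hs
  · rintro _ ⟨s, hs, rfl⟩
    exact mul_mem_posCombCosts ht hs

theorem posCombCosts_smul_nonempty_of_neg_mem {v : E} (hv : v ∈ S) (hv' : -v ∈ S) (r : ℝ) :
    (posCombCosts S F (r • v)).Nonempty := by
  set M := |r| + 1
  have hM : 0 < M := by positivity
  have hrM : 0 < r + M := by linarith [neg_abs_le r]
  have hsplit : r • v = (r + M) • v + M • -v := by module
  rw [hsplit]
  exact ⟨_, add_mem_posCombCosts (mul_mem_posCombCosts hrM (self_mem_posCombCosts hv))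
    (mul_mem_posCombCosts hM (self_mem_posCombCosts hv'))⟩

theorem posCombCosts_nonempty_of_basis {ι : Type*} [Fintype ι] [Nonempty ι]
    (b : Module.Basis ι ℝ E) (hb : ∀ i, b i ∈ S ∧ -b i ∈ S) (x : E) :
    (posCombCosts S F x).Nonempty := by
  rw [← b.sum_repr x]
  refine Finset.sum_induction_nonempty _ (fun y => (posCombCosts S F y).Nonempty)
    (fun y z hy hz => (hy.add hz).mono (posCombCosts_add_subset y z)) Finset.univ_nonempty
    fun i _ => posCombCosts_smul_nonempty_of_neg_mem (hb i).1 (hb i).2 _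

theorem posCombHull_nonneg (hF : ∀ ξ ∈ S, 0 ≤ F ξ) (x : E) : 0 ≤ posCombHull S F x :=
  Real.sInf_nonneg fun _ ht => nonneg_of_mem_posCombCosts hF ht

theorem posCombHull_smul_of_pos {t : ℝ} (ht : 0 < t) (x : E) :
    posCombHull S F (t • x) = t * posCombHull S F x := by
  rw [posCombHull, posCombCosts_smul ht, Real.sInf_smul_of_nonneg ht.le, smul_eq_mul,
    posCombHull]

-- `posCombHull S F 0 = 2 * posCombHull S F 0`, even when `0` has no representation.
theorem posCombHull_zero : posCombHull S F 0 = 0 := by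
  have h := posCombHull_smul_of_pos (S := S) (F := F) two_pos 0
  rw [smul_zero] at h
  linarith

theorem posCombHull_smul {t : ℝ} (ht : 0 ≤ t) (x : E) :
    posCombHull S F (t • x) = t * posCombHull S F x := by
  rcases ht.eq_or_lt with rfl | ht
  · rw [zero_smul, zero_mul, posCombHull_zero]
  · exact posCombHull_smul_of_pos ht x

theorem posCombHull_add_le (hF : ∀ ξ ∈ S, 0 ≤ F ξ) {x y : E}
    (hx : (posCombCosts S F x).Nonempty) (hy : (posCombCosts S F y).Nonempty) :
    posCombHull S F (x + y) ≤ posCombHull S F x + posCombHull S F y := by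
  rw [posCombHull, posCombHull, posCombHull,
    ← csInf_add hx (posCombCosts_bddBelow hF x) hy (posCombCosts_bddBelow hF y)]
  exact csInf_le_csInf (posCombCosts_bddBelow hF _) (hx.add hy) (posCombCosts_add_subset x y)

theorem convexOn_posCombHull (hF : ∀ ξ ∈ S, 0 ≤ F ξ)
    (hS : ∀ x, (posCombCosts S F x).Nonempty) : ConvexOn ℝ Set.univ (posCombHull S F) := by
  refine ⟨convex_univ, fun x _ y _ a b ha hb _ => ?_⟩
  calc posCombHull S F (a • x + b • y)
      ≤ posCombHull S F (a • x) + posCombHull S F (b • y) := posCombHull_add_le hF (hS _) (hS _)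
    _ = a • posCombHull S F x + b • posCombHull S F y := by
      rw [posCombHull_smul ha, posCombHull_smul hb, smul_eq_mul, smul_eq_mul]

end PosComb

section Uniform

variable {E : Type*} [SeminormedAddCommGroup E] [NormedSpace ℝ E] {S : Set E} {F : E → ℝ}

theorem le_of_mem_posCombCosts_of_uniform {c : ℝ} (hc : 0 ≤ c)
    (hUPC : ∀ (d : ℕ), 1 ≤ d → ∀ (m : Fin d → ℝ) (η₀ : E) (η : Fin d → E),
      (∀ i, 0 < m i) → η₀ ∈ S → (∀ i, η i ∈ S) → η₀ = ∑ i, m i • η i →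
      ∑ i, m i * F (η i) - F η₀ ≥ c * ((∑ i, m i * ‖η i‖) - ‖η₀‖))
    {ξ : E} (hξ : ξ ∈ S) {t : ℝ} (ht : t ∈ posCombCosts S F ξ) : F ξ ≤ t := by
  obtain ⟨N, m, η, hN, hm, hη, hsum, rfl⟩ := ht
  have htri : ‖ξ‖ ≤ ∑ i, m i * ‖η i‖ := by
    calc ‖ξ‖ ≤ ∑ i, ‖m i • η i‖ := hsum ▸ norm_sum_le _ _
      _ = ∑ i, m i * ‖η i‖ := by simp [norm_smul, abs_of_pos (hm _)]
  nlinarith [hUPC N hN m ξ η hm hξ hη hsum, mul_nonneg hc (sub_nonneg.mpr htri)]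

theorem posCombHull_eq_of_uniform {c : ℝ} (hc : 0 ≤ c)
    (hUPC : ∀ (d : ℕ), 1 ≤ d → ∀ (m : Fin d → ℝ) (η₀ : E) (η : Fin d → E),
      (∀ i, 0 < m i) → η₀ ∈ S → (∀ i, η i ∈ S) → η₀ = ∑ i, m i • η i →
      ∑ i, m i * F (η i) - F η₀ ≥ c * ((∑ i, m i * ‖η i‖) - ‖η₀‖))
    {ξ : E} (hξ : ξ ∈ S) : posCombHull S F ξ = F ξ := by
  have hlower : ∀ t ∈ posCombCosts S F ξ, F ξ ≤ t :=
    fun _ => le_of_mem_posCombCosts_of_uniform hc hUPC hξ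
  exact le_antisymm (csInf_le ⟨F ξ, hlower⟩ (self_mem_posCombCosts hξ))
    (le_csInf ⟨F ξ, self_mem_posCombCosts hξ⟩ hlower)

end Uniform

section Grassmannian

variable {n k : ℕ}

theorem pluecker_mul (A : Matrix (Fin n) (Fin k) ℝ) (D : Matrix (Fin k) (Fin k) ℝ) :
    pluecker n k (A * D) = D.det • pluecker n k A := by
  ext s
  simp only [pluecker, PiLp.toLp_apply, PiLp.smul_apply, smul_eq_mul,
    Matrix.submatrix_mul A D _ id id Function.bijective_id, Matrix.submatrix_id_id,
    Matrix.det_mul, mul_comm]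

theorem det_smul_mem_Grass {D : Matrix (Fin k) (Fin k) ℝ} (hD : Dᵀ * D = 1)
    {x : EuclideanSpace ℝ (Lam n k)} (hx : x ∈ Grass n k) : D.det • x ∈ Grass n k := by
  obtain ⟨A, hA, rfl⟩ := hx
  refine ⟨A * D, ?_, pluecker_mul A D⟩
  rw [Matrix.transpose_mul, Matrix.mul_assoc, ← Matrix.mul_assoc Aᵀ, hA, Matrix.one_mul, hD]

theorem neg_mem_Grass (hk : 1 ≤ k) {x : EuclideanSpace ℝ (Lam n k)} (hx : x ∈ Grass n k) :
    -x ∈ Grass n k := by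
  set r : Fin k → ℝ := fun j => if j = ⟨0, hk⟩ then -1 else 1
  have hr : ∀ j, r j * r j = 1 := fun j => by dsimp only [r]; split_ifs <;> norm_num
  have hD : (Matrix.diagonal r)ᵀ * Matrix.diagonal r = 1 := by
    rw [Matrix.diagonal_transpose, Matrix.diagonal_mul_diagonal, ← Matrix.diagonal_one]
    exact congrArg Matrix.diagonal (funext hr)
  have hdet : (Matrix.diagonal r).det = -1 := by simp [r, Matrix.det_diagonal]
  simpa [hdet] using det_smul_mem_Grass hD hx

theorem det_one_submatrix_orderEmbOfFin (s t : Lam n k) :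
    ((1 : Matrix (Fin n) (Fin n) ℝ).submatrix (s.1.orderEmbOfFin s.2)
      (t.1.orderEmbOfFin t.2)).det = if s = t then 1 else 0 := by
  split_ifs with hst
  · subst hst
    rw [Matrix.submatrix_one _ (s.1.orderEmbOfFin s.2).injective, Matrix.det_one]
  · have hsub : ¬ s.1 ⊆ t.1 := fun h =>
      hst (Subtype.ext (Finset.eq_of_subset_of_card_le h (by rw [s.2, t.2])))
    obtain ⟨a, has, hat⟩ := Finset.not_subset.mp hsub
    obtain ⟨p, rfl⟩ : a ∈ Set.range (s.1.orderEmbOfFin s.2) := by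
      rwa [Finset.range_orderEmbOfFin]
    refine Matrix.det_eq_zero_of_row_eq_zero p fun q => Matrix.one_apply_ne ?_
    exact fun h => hat (h ▸ Finset.orderEmbOfFin_mem t.1 t.2 q)

theorem single_mem_Grass (t : Lam n k) : EuclideanSpace.single t (1 : ℝ) ∈ Grass n k := by
  set f := t.1.orderEmbOfFin t.2
  refine ⟨(1 : Matrix (Fin n) (Fin n) ℝ).submatrix id f, ?_, ?_⟩
  · rw [Matrix.transpose_submatrix, Matrix.transpose_one,
      ← Matrix.submatrix_mul _ _ _ _ _ Function.bijective_id, Matrix.one_mul,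
      Matrix.submatrix_one _ f.injective]
  · ext s
    simp [pluecker, f, det_one_submatrix_orderEmbOfFin, PiLp.single_apply]

theorem nonempty_Lam (hkn : k ≤ n) : Nonempty (Lam n k) := by
  obtain ⟨s, -, hs⟩ := Finset.exists_subset_card_eq (s := (Finset.univ : Finset (Fin n)))
    (n := k) (by simpa using hkn)
  exact ⟨⟨s, hs⟩⟩

theorem reprSet_nonempty (hk : 1 ≤ k) (hkn : k ≤ n) (F : EuclideanSpace ℝ (Lam n k) → ℝ)
    (x : EuclideanSpace ℝ (Lam n k)) : (reprSet n k F x).Nonempty :=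
  haveI := nonempty_Lam hkn
  posCombCosts_nonempty_of_basis (PiLp.basisFun 2 ℝ (Lam n k))
    (fun t => by simpa using ⟨single_mem_Grass t, neg_mem_Grass hk (single_mem_Grass t)⟩) x

end Grassmannian

/-- uniform polyconvexity implies polyconvexity. -/
theorem polyconvex_of_uniformly_polyconvex (n k : ℕ) (hk : 1 ≤ k) (hkn : k ≤ n)
    (c : ℝ) (hc : 0 < c)
    (F : EuclideanSpace ℝ (Lam n k) → ℝ)
    (hF : ∀ ξ ∈ Grass n k, 0 ≤ F ξ)
    (hUPC : ∀ (d : ℕ), 1 ≤ d → ∀ (m : Fin d → ℝ)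
      (η₀ : EuclideanSpace ℝ (Lam n k)) (η : Fin d → EuclideanSpace ℝ (Lam n k)),
      (∀ i, 0 < m i) → η₀ ∈ Grass n k → (∀ i, η i ∈ Grass n k) →
      η₀ = ∑ i, m i • η i →
      ∑ i, m i * F (η i) - F η₀ ≥ c * ((∑ i, m i * ‖η i‖) - ‖η₀‖)) :
    (∀ ξ ∈ Grass n k, ConvF n k F ξ = F ξ) ∧
    (∃ h : EuclideanSpace ℝ (Lam n k) → ℝ, IsGauge n k h ∧
      ∀ ξ ∈ Grass n k, h ξ = F ξ) := by
  have hConvF : ∀ ξ ∈ Grass n k, ConvF n k F ξ = F ξ :=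
    fun _ hξ => posCombHull_eq_of_uniform hc.le hUPC hξ
  exact ⟨hConvF, ConvF n k F,
    ⟨posCombHull_nonneg hF, convexOn_posCombHull hF (reprSet_nonempty hk hkn F),
      fun _ _ ht => posCombHull_smul ht _⟩, hConvF⟩
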